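/- There exists c₀ > 0 such that for every Q₁ ∈ W₁ there exist Q₂, Q₂′ ∈ W₂ with F(Q₁,Q₂) < −c₀ and F(Q₁,Q₂′) > c₀; that is, min_{Q₂∈W₂} F(Q₁,Q₂) < −c₀ and max_{Q₂∈W₂} F(Q₁,Q₂) > c₀ uniformly in Q₁ ∈ W₁. -/

import Mathlib

noncomputable section
open Matrix

abbrev M3 := Matrix (Fin 3) (Fin 3) ℝ

/-- The group `SO(3)` of real 3×3 orthogonal matrices with determinant 1. -/
def SO3 : Set M3 := {U | Uᵀ * U = 1 ∧ U.det = 1}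

/-- The matrix of the orthogonal projection of `ℝ³` onto the span of `e₁`. -/
def P : M3 := Matrix.single 0 0 1

/-- `L(Q) = 35 p Q p − 10 p Q − 10 Q p + 2 Q`. -/
def L (Q : M3) : M3 :=
  (35 : ℝ) • (P * Q * P) - (10 : ℝ) • (P * Q) - (10 : ℝ) • (Q * P) + (2 : ℝ) • Q

/-- The quadrupole-quadrupole interaction `F(Q₁,Q₂) = tr (L(Q₁) Q₂)`. -/
def F (Q₁ Q₂ : M3) : ℝ := (L Q₁ * Q₂).trace

/-- The rotation orbit `W(Q⁰) = {Uᵀ Q⁰ U : U ∈ SO(3)}` of a matrix `Q⁰`. -/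
def W (Q0 : M3) : Set M3 := {Q | ∃ U ∈ SO3, Q = Uᵀ * Q0 * U}

/-! ### Basic group facts about SO3 -/

lemma SO3.one : (1 : M3) ∈ SO3 := by constructor <;> simp

lemma SO3.mul {U V : M3} (hU : U ∈ SO3) (hV : V ∈ SO3) : U * V ∈ SO3 := by
  obtain ⟨hU1, hU2⟩ := hU; obtain ⟨hV1, hV2⟩ := hV
  constructor
  · rw [transpose_mul, Matrix.mul_assoc, ← Matrix.mul_assoc Uᵀ U V, hU1, Matrix.one_mul, hV1]
  · rw [det_mul, hU2, hV2, mul_one]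

lemma SO3.mulT {U : M3} (hU : U ∈ SO3) : U * Uᵀ = 1 :=
  mul_eq_one_comm.mp hU.1

lemma SO3.transp {U : M3} (hU : U ∈ SO3) : Uᵀ ∈ SO3 := by
  refine ⟨?_, by rw [det_transpose]; exact hU.2⟩
  rw [transpose_transpose]; exact SO3.mulT hU

lemma cancel_left {U X : M3} (h : Uᵀ * U = 1) : Uᵀ * (U * X) = X := by
  rw [← Matrix.mul_assoc, h, Matrix.one_mul]

lemma cancel_left' {U X : M3} (h : U * Uᵀ = 1) : U * (Uᵀ * X) = X := by
  rw [← Matrix.mul_assoc, h, Matrix.one_mul]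

lemma trace_conj {V X : M3} (h : Vᵀ * V = 1) : (V * X * Vᵀ).trace = X.trace := by
  rw [Matrix.trace_mul_comm, ← Matrix.mul_assoc, h, Matrix.one_mul]

lemma trace_conj' {U Q : M3} (hU : Uᵀ * U = 1) : (Uᵀ * Q * U).trace = Q.trace := by
  rw [Matrix.trace_mul_comm, ← Matrix.mul_assoc, mul_eq_one_comm.mp hU, Matrix.one_mul]

/-! ### Rotations used for the averaging / diagonal arguments -/

def R1 : M3 := !![0,1,0;1,0,0;0,0,-1]
def R2 : M3 := !![0,0,1;0,-1,0;1,0,0]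
def R3 : M3 := !![-1,0,0;0,0,1;0,1,0]

lemma R1T : R1ᵀ = R1 := by
  ext i j; fin_cases i <;> fin_cases j <;> simp [R1, Matrix.transpose_apply, Matrix.vecHead, Matrix.vecTail]
lemma R2T : R2ᵀ = R2 := by
  ext i j; fin_cases i <;> fin_cases j <;> simp [R2, Matrix.transpose_apply, Matrix.vecHead, Matrix.vecTail]
lemma R3T : R3ᵀ = R3 := by
  ext i j; fin_cases i <;> fin_cases j <;> simp [R3, Matrix.transpose_apply, Matrix.vecHead, Matrix.vecTail]

lemma R1mem : R1 ∈ SO3 := by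
  constructor
  · rw [R1T]; ext i j; fin_cases i <;> fin_cases j <;>
      simp [R1, Matrix.mul_apply, Fin.sum_univ_three, Matrix.one_apply, Matrix.vecHead, Matrix.vecTail]
  · simp [R1, Matrix.det_fin_three]
lemma R2mem : R2 ∈ SO3 := by
  constructor
  · rw [R2T]; ext i j; fin_cases i <;> fin_cases j <;>
      simp [R2, Matrix.mul_apply, Fin.sum_univ_three, Matrix.one_apply, Matrix.vecHead, Matrix.vecTail]
  · simp [R2, Matrix.det_fin_three]
lemma R3mem : R3 ∈ SO3 := by
  constructor
  · rw [R3T]; ext i j; fin_cases i <;> fin_cases j <;>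
      simp [R3, Matrix.mul_apply, Fin.sum_univ_three, Matrix.one_apply, Matrix.vecHead, Matrix.vecTail]
  · simp [R3, Matrix.det_fin_three]

/-! ### Key lemma for diagonal matrices -/

lemma diagKey (v w : Fin 3 → ℝ) (hv : v 0 + v 1 + v 2 = 0) (hw : w 0 + w 1 + w 2 = 0)
    (hvn : ¬ (v 0 = 0 ∧ v 1 = 0 ∧ v 2 = 0)) (hwn : ¬ (w 0 = 0 ∧ w 1 = 0 ∧ w 2 = 0)) :
    ∃ R ∈ SO3, ((Matrix.diagonal v) * Rᵀ * (Matrix.diagonal w) * R).trace ≠ 0 := by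
  have e0 : ((Matrix.diagonal v) * (1:M3)ᵀ * (Matrix.diagonal w) * 1).trace
      = v 0 * w 0 + v 1 * w 1 + v 2 * w 2 := by
    simp [Matrix.trace, Matrix.mul_apply, Matrix.diagonal_apply, Fin.sum_univ_three,
      Matrix.one_apply, Matrix.transpose_apply, Matrix.vecHead, Matrix.vecTail]
  have e1 : ((Matrix.diagonal v) * R1ᵀ * (Matrix.diagonal w) * R1).trace
      = v 0 * w 1 + v 1 * w 0 + v 2 * w 2 := by
    rw [R1T]
    simp [Matrix.trace, Matrix.mul_apply, Matrix.diagonal_apply, Fin.sum_univ_three, R1, Matrix.vecHead, Matrix.vecTail]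
    try ring
  have e2 : ((Matrix.diagonal v) * R2ᵀ * (Matrix.diagonal w) * R2).trace
      = v 0 * w 2 + v 1 * w 1 + v 2 * w 0 := by
    rw [R2T]
    simp [Matrix.trace, Matrix.mul_apply, Matrix.diagonal_apply, Fin.sum_univ_three, R2, Matrix.vecHead, Matrix.vecTail]
    try ring
  have e3 : ((Matrix.diagonal v) * R3ᵀ * (Matrix.diagonal w) * R3).trace
      = v 0 * w 0 + v 1 * w 2 + v 2 * w 1 := by
    rw [R3T]
    simp [Matrix.trace, Matrix.mul_apply, Matrix.diagonal_apply, Fin.sum_univ_three, R3, Matrix.vecHead, Matrix.vecTail]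
    try ring
  by_contra h
  push_neg at h
  have t0 := h 1 SO3.one; rw [e0] at t0
  have t1 := h R1 R1mem; rw [e1] at t1
  have t2 := h R2 R2mem; rw [e2] at t2
  have t3 := h R3 R3mem; rw [e3] at t3
  have h01 : (v 0 - v 1) * (w 0 - w 1) = 0 := by linear_combination t0 - t1
  have h02 : (v 0 - v 2) * (w 0 - w 2) = 0 := by linear_combination t0 - t2
  have h12 : (v 1 - v 2) * (w 1 - w 2) = 0 := by linear_combination t0 - t3
  rcases mul_eq_zero.mp h01 with hv01 | hw01
  · by_cases hv0 : v 0 = 0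
    · exact hvn ⟨hv0, by linarith, by linarith⟩
    · have hw02 : w 0 = w 2 := by
        rcases mul_eq_zero.mp h02 with h' | h'
        · exfalso; apply hv0; linarith
        · linarith
      have hw12 : w 1 = w 2 := by
        rcases mul_eq_zero.mp h12 with h' | h'
        · exfalso; apply hv0; linarith
        · linarith
      exact hwn ⟨by linarith, by linarith, by linarith⟩
  · by_cases hw0 : w 0 = 0
    · exact hwn ⟨hw0, by linarith, by linarith⟩
    · have hv02 : v 0 = v 2 := by
        rcases mul_eq_zero.mp h02 with h' | h'
        · linarith
        · exfalso; apply hw0; linarith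
      have hv12 : v 1 = v 2 := by
        rcases mul_eq_zero.mp h12 with h' | h'
        · linarith
        · exfalso; apply hw0; linarith
      exact hvn ⟨by linarith, by linarith, by linarith⟩

/-! ### Spectral theorem with SO(3) conjugator -/

def S1 : M3 := Matrix.diagonal ![-1, 1, 1]

lemma S1T : S1ᵀ = S1 := Matrix.diagonal_transpose _

lemma S1S1 : S1 * S1 = 1 := by
  rw [S1, Matrix.diagonal_mul_diagonal]
  have : (fun i => (![-1, 1, 1] : Fin 3 → ℝ) i * ![-1, 1, 1] i) = fun _ => (1:ℝ) := by
    funext i; fin_cases i <;> simp [Matrix.vecHead, Matrix.vecTail]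
  rw [this, Matrix.diagonal_one]

lemma S1_diag_S1 (v : Fin 3 → ℝ) : S1 * Matrix.diagonal v * S1 = Matrix.diagonal v := by
  ext i j
  fin_cases i <;> fin_cases j <;>
    simp [S1, Matrix.mul_apply, Matrix.diagonal_apply, Fin.sum_univ_three,
      Matrix.vecHead, Matrix.vecTail]

lemma spectral3 (A : M3) (hs : Aᵀ = A) :
    ∃ V ∈ SO3, ∃ v : Fin 3 → ℝ, A = V * Matrix.diagonal v * Vᵀ := by
  have hA : A.IsHermitian := by
    rw [Matrix.IsHermitian, Matrix.conjTranspose_eq_transpose_of_trivial, hs]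
  set V0 : M3 := (Matrix.IsHermitian.eigenvectorUnitary hA : M3) with hV0
  have hunit : V0ᵀ * V0 = 1 := by
    have := Matrix.mem_unitaryGroup_iff'.mp (Matrix.IsHermitian.eigenvectorUnitary hA).2
    rwa [Matrix.star_eq_conjTranspose, Matrix.conjTranspose_eq_transpose_of_trivial] at this
  have hspec : A = V0 * Matrix.diagonal (hA.eigenvalues) * V0ᵀ := by
    have := hA.spectral_theorem
    rwa [Unitary.conjStarAlgAut_apply, Matrix.star_eq_conjTranspose, Matrix.conjTranspose_eq_transpose_of_trivial,
      show (RCLike.ofReal ∘ hA.eigenvalues : Fin 3 → ℝ) = hA.eigenvalues from rfl] at this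
  have hdet : V0.det = 1 ∨ V0.det = -1 := by
    have h2 : V0.det * V0.det = 1 := by
      have := congrArg Matrix.det hunit
      rwa [Matrix.det_mul, Matrix.det_transpose, Matrix.det_one] at this
    rcases mul_self_eq_one_iff.mp h2 with h | h
    · exact Or.inl h
    · exact Or.inr h
  rcases hdet with h1 | h1
  · exact ⟨V0, ⟨hunit, h1⟩, hA.eigenvalues, hspec⟩
  · refine ⟨V0 * S1, ⟨?_, ?_⟩, hA.eigenvalues, ?_⟩
    · rw [Matrix.transpose_mul, S1T, Matrix.mul_assoc, ← Matrix.mul_assoc V0ᵀ, hunit,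
        Matrix.one_mul, S1S1]
    · rw [Matrix.det_mul, h1, S1, Matrix.det_diagonal]
      simp [Matrix.vecHead, Matrix.vecTail, Fin.prod_univ_three]
    · rw [Matrix.transpose_mul, S1T]
      calc A = V0 * Matrix.diagonal hA.eigenvalues * V0ᵀ := hspec
      _ = V0 * (S1 * Matrix.diagonal hA.eigenvalues * S1) * V0ᵀ := by rw [S1_diag_S1]
      _ = V0 * S1 * (Matrix.diagonal hA.eigenvalues * (S1 * V0ᵀ)) := by
          simp only [Matrix.mul_assoc]
      _ = V0 * S1 * Matrix.diagonal hA.eigenvalues * (S1 * V0ᵀ) :=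
          (Matrix.mul_assoc _ _ _).symm

/-! ### Structure of L -/

lemma P_eq : P = !![1,0,0;0,0,0;0,0,0] := by
  ext i j
  fin_cases i <;> fin_cases j <;>
    simp [P, Matrix.single, Matrix.vecHead, Matrix.vecTail]

lemma Lent (Q : M3) : L Q =
    !![17 * Q 0 0, -8 * Q 0 1, -8 * Q 0 2;
       -8 * Q 1 0,  2 * Q 1 1,  2 * Q 1 2;
       -8 * Q 2 0,  2 * Q 2 1,  2 * Q 2 2] := by
  ext i j
  fin_cases i <;> fin_cases j <;>
    (simp [L, P_eq, Matrix.mul_apply, Matrix.vecMul, dotProduct, Fin.sum_univ_three,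
       Matrix.vecHead, Matrix.vecTail]
     <;> try ring)

lemma F_eq_A (Q1 Q2 : M3) (h2 : Q2.trace = 0) :
    F Q1 Q2 = ((L Q1 - (5 * Q1 0 0) • (1:M3)) * Q2).trace := by
  rw [F, Matrix.sub_mul, Matrix.trace_sub, Matrix.smul_mul, Matrix.one_mul,
    Matrix.trace_smul, h2]
  simp

lemma F_add (Q1 X Y : M3) : F Q1 (X + Y) = F Q1 X + F Q1 Y := by
  rw [F, F, F, Matrix.mul_add, Matrix.trace_add]

lemma F_zero (Q1 : M3) : F Q1 0 = 0 := by
  rw [F, Matrix.mul_zero, Matrix.trace_zero]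

/-! ### Pointwise nonvanishing -/

lemma A_transpose (Q : M3) (hs : Qᵀ = Q) :
    (L Q - (5 * Q 0 0) • (1:M3))ᵀ = L Q - (5 * Q 0 0) • (1:M3) := by
  have hs' : ∀ i j, Q j i = Q i j := fun i j => by
    have := congrFun (congrFun hs i) j
    simpa [Matrix.transpose_apply] using this
  ext i j
  fin_cases i <;> fin_cases j <;>
    simp [Lent, Matrix.transpose_apply, Matrix.one_apply, Matrix.vecHead, Matrix.vecTail,
      hs' 0 1, hs' 0 2, hs' 1 2]

lemma A_trace (Q : M3) (htr : Q.trace = 0) :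
    (L Q - (5 * Q 0 0) • (1:M3)).trace = 0 := by
  have h : Q 0 0 + Q 1 1 + Q 2 2 = 0 := by
    simpa [Matrix.trace, Fin.sum_univ_three] using htr
  simp [Lent, Matrix.trace, Fin.sum_univ_three, Matrix.trace_smul, Matrix.vecHead,
    Matrix.vecTail, Matrix.one_apply]
  linarith

lemma A_ne_zero (Q : M3) (hn : Q ≠ 0) : L Q - (5 * Q 0 0) • (1:M3) ≠ 0 := by
  intro hA
  apply hn
  have e : ∀ i j, (L Q - (5 * Q 0 0) • (1:M3)) i j = 0 := fun i j => by
    rw [hA]; rfl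
  have e00 := e 0 0; have e01 := e 0 1; have e02 := e 0 2
  have e10 := e 1 0; have e11 := e 1 1; have e12 := e 1 2
  have e20 := e 2 0; have e21 := e 2 1; have e22 := e 2 2
  simp [Lent, Matrix.one_apply, Matrix.vecHead, Matrix.vecTail] at e00 e01 e02 e10 e11 e12 e20 e21 e22
  have hq00 : Q 0 0 = 0 := by linarith
  ext i j
  fin_cases i <;> fin_cases j <;> simp <;> linarith

lemma trace_sum3 {v : Fin 3 → ℝ} : (Matrix.diagonal v).trace = v 0 + v 1 + v 2 := by
  simp [Matrix.trace_diagonal, Fin.sum_univ_three]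

/-- For every symmetric traceless nonzero `B` and symmetric traceless nonzero `Q20`, there is
an orbit element on which the pairing is nonzero. -/
lemma exists_F_ne (Q1 Q20 : M3) (h1s : Q1ᵀ = Q1) (h1t : Q1.trace = 0) (h1n : Q1 ≠ 0)
    (h2s : Q20ᵀ = Q20) (h2t : Q20.trace = 0) (h2n : Q20 ≠ 0) :
    ∃ Q2 ∈ W Q20, F Q1 Q2 ≠ 0 := by
  set A : M3 := L Q1 - (5 * Q1 0 0) • (1:M3) with hA
  obtain ⟨V, hV, v, hAv⟩ := spectral3 A (A_transpose Q1 h1s)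
  obtain ⟨V2, hV2, w, hQw⟩ := spectral3 Q20 h2s
  have hVt : Vᵀ * V = 1 := hV.1
  have hVt' : V * Vᵀ = 1 := SO3.mulT hV
  have hV2t : V2ᵀ * V2 = 1 := hV2.1
  have hV2t' : V2 * V2ᵀ = 1 := SO3.mulT hV2
  -- trace facts
  have hvsum : v 0 + v 1 + v 2 = 0 := by
    have : A.trace = (Matrix.diagonal v).trace := by
      rw [hAv, trace_conj hVt]
    rw [A_trace Q1 h1t] at this
    rw [trace_sum3] at this
    linarith
  have hwsum : w 0 + w 1 + w 2 = 0 := by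
    have : Q20.trace = (Matrix.diagonal w).trace := by
      rw [hQw, trace_conj hV2t]
    rw [h2t] at this
    rw [trace_sum3] at this
    linarith
  have hvn : ¬ (v 0 = 0 ∧ v 1 = 0 ∧ v 2 = 0) := by
    rintro ⟨a, b, c⟩
    apply A_ne_zero Q1 h1n
    rw [← hA, hAv]
    have hd : Matrix.diagonal v = 0 := by
      have hv0 : v = 0 := by funext i; fin_cases i <;> assumption
      rw [hv0]; exact Matrix.diagonal_zero
    rw [hd, Matrix.mul_zero, Matrix.zero_mul]
  have hwn : ¬ (w 0 = 0 ∧ w 1 = 0 ∧ w 2 = 0) := by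
    rintro ⟨a, b, c⟩
    apply h2n
    rw [hQw]
    have hd : Matrix.diagonal w = 0 := by
      have hw0 : w = 0 := by funext i; fin_cases i <;> assumption
      rw [hw0]; exact Matrix.diagonal_zero
    rw [hd, Matrix.mul_zero, Matrix.zero_mul]
  obtain ⟨R, hR, hRne⟩ := diagKey v w hvsum hwsum hvn hwn
  set U : M3 := V2 * R * Vᵀ with hU
  have hUmem : U ∈ SO3 := SO3.mul (SO3.mul hV2 hR) (SO3.transp hV)
  refine ⟨Uᵀ * Q20 * U, ⟨U, hUmem, rfl⟩, ?_⟩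
  have htr2 : (Uᵀ * Q20 * U).trace = 0 := by rw [trace_conj' hUmem.1, h2t]
  rw [F_eq_A Q1 _ htr2, ← hA]
  -- compute : A * (Uᵀ Q20 U) = V * (D₁ Rᵀ D₂ R) * Vᵀ
  have key : A * (Uᵀ * Q20 * U)
      = V * (Matrix.diagonal v * Rᵀ * Matrix.diagonal w * R) * Vᵀ := by
    rw [hAv, hQw, hU]
    simp only [Matrix.transpose_mul, Matrix.transpose_transpose, Matrix.mul_assoc]
    simp only [cancel_left hVt, cancel_left hV2t, cancel_left' hVt', cancel_left' hV2t']
  rw [key]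
  have : (V * (Matrix.diagonal v * Rᵀ * Matrix.diagonal w * R) * Vᵀ).trace
      = (Matrix.diagonal v * Rᵀ * Matrix.diagonal w * R).trace := trace_conj hVt
  rw [this]
  exact hRne

/-! ### Averaging over 12 rotations: both signs occur -/

def Cc : M3 := !![0,1,0;0,0,1;1,0,0]
def T1 : M3 := !![1,0,0;0,-1,0;0,0,-1]
def T2 : M3 := !![-1,0,0;0,1,0;0,0,-1]
def T3 : M3 := !![-1,0,0;0,-1,0;0,0,1]

lemma Ccmem : Cc ∈ SO3 := by
  constructor
  · ext i j; fin_cases i <;> fin_cases j <;>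
      simp [Cc, Matrix.mul_apply, Fin.sum_univ_three, Matrix.one_apply,
        Matrix.transpose_apply, Matrix.vecHead, Matrix.vecTail]
  · simp [Cc, Matrix.det_fin_three]

lemma T1T : T1ᵀ = T1 := by
  ext i j; fin_cases i <;> fin_cases j <;> simp [T1, Matrix.transpose_apply, Matrix.vecHead, Matrix.vecTail]
lemma T2T : T2ᵀ = T2 := by
  ext i j; fin_cases i <;> fin_cases j <;> simp [T2, Matrix.transpose_apply, Matrix.vecHead, Matrix.vecTail]
lemma T3T : T3ᵀ = T3 := by
  ext i j; fin_cases i <;> fin_cases j <;> simp [T3, Matrix.transpose_apply, Matrix.vecHead, Matrix.vecTail]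

lemma T1mem : T1 ∈ SO3 := by
  constructor
  · rw [T1T]; ext i j; fin_cases i <;> fin_cases j <;>
      simp [T1, Matrix.mul_apply, Fin.sum_univ_three, Matrix.one_apply, Matrix.vecHead, Matrix.vecTail]
  · simp [T1, Matrix.det_fin_three]
lemma T2mem : T2 ∈ SO3 := by
  constructor
  · rw [T2T]; ext i j; fin_cases i <;> fin_cases j <;>
      simp [T2, Matrix.mul_apply, Fin.sum_univ_three, Matrix.one_apply, Matrix.vecHead, Matrix.vecTail]
  · simp [T2, Matrix.det_fin_three]
lemma T3mem : T3 ∈ SO3 := by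
  constructor
  · rw [T3T]; ext i j; fin_cases i <;> fin_cases j <;>
      simp [T3, Matrix.mul_apply, Fin.sum_univ_three, Matrix.one_apply, Matrix.vecHead, Matrix.vecTail]
  · simp [T3, Matrix.det_fin_three]

/-- Sum of the four sign conjugates is 4 times the diagonal part. -/
lemma sum4 (Q : M3) :
    Q + T1 * Q * T1 + T2 * Q * T2 + T3 * Q * T3
      = (4:ℝ) • Matrix.diagonal (fun i => Q i i) := by
  ext i j
  fin_cases i <;> fin_cases j <;>
    simp [T1, T2, T3, Matrix.mul_apply, Matrix.vecMul, dotProduct,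
      Matrix.diagonal_apply, Fin.sum_univ_three, Matrix.vecHead, Matrix.vecTail] <;> ring

/-- Sum of the three cyclic conjugates of a traceless diagonal matrix vanishes. -/
lemma sum3 (d : Fin 3 → ℝ) (hd : d 0 + d 1 + d 2 = 0) :
    Matrix.diagonal d + Ccᵀ * Matrix.diagonal d * Cc + (Cc * Cc)ᵀ * Matrix.diagonal d * (Cc * Cc)
      = 0 := by
  have hCC : Cc * Cc = !![0,0,1;1,0,0;0,1,0] := by
    ext i j; fin_cases i <;> fin_cases j <;>
      simp [Cc, Matrix.mul_apply, Fin.sum_univ_three, Matrix.vecHead, Matrix.vecTail]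
  rw [hCC]
  ext i j
  fin_cases i <;> fin_cases j <;>
    (simp [Cc, Matrix.mul_apply, Matrix.diagonal_apply, Fin.sum_univ_three,
      Matrix.transpose_apply, Matrix.vecHead, Matrix.vecTail]
     <;> try linarith)

/-- The full 12-term average vanishes on traceless matrices. -/
lemma sum12 (Q : M3) (ht : Q.trace = 0) :
    (Q + T1 * Q * T1 + T2 * Q * T2 + T3 * Q * T3)
    + Ccᵀ * (Q + T1 * Q * T1 + T2 * Q * T2 + T3 * Q * T3) * Cc
    + (Cc * Cc)ᵀ * (Q + T1 * Q * T1 + T2 * Q * T2 + T3 * Q * T3) * (Cc * Cc) = 0 := by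
  rw [sum4]
  have hd : Q 0 0 + Q 1 1 + Q 2 2 = 0 := by
    simpa [Matrix.trace, Fin.sum_univ_three] using ht
  have h3 := sum3 (fun i => Q i i) hd
  calc (4:ℝ) • Matrix.diagonal (fun i => Q i i)
        + Ccᵀ * ((4:ℝ) • Matrix.diagonal (fun i => Q i i)) * Cc
        + (Cc * Cc)ᵀ * ((4:ℝ) • Matrix.diagonal (fun i => Q i i)) * (Cc * Cc)
      = (4:ℝ) • (Matrix.diagonal (fun i => Q i i)
        + Ccᵀ * Matrix.diagonal (fun i => Q i i) * Cc
        + (Cc * Cc)ᵀ * Matrix.diagonal (fun i => Q i i) * (Cc * Cc)) := by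
        simp only [Matrix.mul_smul, Matrix.smul_mul, smul_add]
    _ = 0 := by rw [h3, smul_zero]

/-- If the pairing is somewhere nonzero on the orbit, it takes both signs. -/
lemma both_signs (Q1 Q20 : M3) (h2t : Q20.trace = 0)
    (hne : ∃ Q2 ∈ W Q20, F Q1 Q2 ≠ 0) :
    (∃ Q2 ∈ W Q20, F Q1 Q2 < 0) ∧ (∃ Q2 ∈ W Q20, 0 < F Q1 Q2) := by
  obtain ⟨Q2, ⟨U, hU, rfl⟩, ht⟩ := hne
  set Q' : M3 := Uᵀ * Q20 * U with hQ'
  have htr : Q'.trace = 0 := by rw [hQ', trace_conj' hU.1, h2t]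
  -- the 12 conjugating rotations
  have conj_mem : ∀ V ∈ SO3, Vᵀ * Q' * V ∈ W Q20 := by
    intro V hV
    refine ⟨U * V, SO3.mul hU hV, ?_⟩
    rw [hQ']
    simp only [Matrix.transpose_mul, Matrix.mul_assoc]
  -- F-values of the 12 conjugates sum to zero
  have hsum := sum12 Q' htr
  have hF0 := congrArg (F Q1) hsum
  rw [F_zero] at hF0
  -- expand F over the sum
  have hexp : F Q1 (Q' + T1 * Q' * T1 + T2 * Q' * T2 + T3 * Q' * T3)
      + F Q1 (Ccᵀ * (Q' + T1 * Q' * T1 + T2 * Q' * T2 + T3 * Q' * T3) * Cc)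
      + F Q1 ((Cc * Cc)ᵀ * (Q' + T1 * Q' * T1 + T2 * Q' * T2 + T3 * Q' * T3) * (Cc * Cc))
      = 0 := by
    rw [← F_add, ← F_add]; exact hF0
  -- distribute conjugation over the inner sums
  have dist : ∀ V : M3, Vᵀ * (Q' + T1 * Q' * T1 + T2 * Q' * T2 + T3 * Q' * T3) * V
      = Vᵀ * Q' * V + Vᵀ * (T1 * Q' * T1) * V + Vᵀ * (T2 * Q' * T2) * V
        + Vᵀ * (T3 * Q' * T3) * V := by
    intro V
    simp only [Matrix.mul_add, Matrix.add_mul]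
  -- the list of twelve values
  have key : F Q1 Q' + F Q1 (T1 * Q' * T1) + F Q1 (T2 * Q' * T2) + F Q1 (T3 * Q' * T3)
      + (F Q1 (Ccᵀ * Q' * Cc) + F Q1 (Ccᵀ * (T1 * Q' * T1) * Cc)
        + F Q1 (Ccᵀ * (T2 * Q' * T2) * Cc) + F Q1 (Ccᵀ * (T3 * Q' * T3) * Cc))
      + (F Q1 ((Cc*Cc)ᵀ * Q' * (Cc*Cc)) + F Q1 ((Cc*Cc)ᵀ * (T1 * Q' * T1) * (Cc*Cc))
        + F Q1 ((Cc*Cc)ᵀ * (T2 * Q' * T2) * (Cc*Cc)) + F Q1 ((Cc*Cc)ᵀ * (T3 * Q' * T3) * (Cc*Cc)))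
      = 0 := by
    (rw [← hexp, dist Cc, dist (Cc*Cc)]; simp only [F_add]) <;> ring
  -- each of the twelve matrices lies in the orbit
  have m1 : Q' ∈ W Q20 := ⟨U, hU, rfl⟩
  have mT : ∀ V ∈ SO3, Vᵀ = V → ∀ V' ∈ SO3, (V'ᵀ * (V * Q' * V) * V') ∈ W Q20 := by
    intro V hV hVT V' hV' 
    have : V * Q' * V = Vᵀ * Q' * V := by rw [hVT]
    rw [this]
    have : V'ᵀ * (Vᵀ * Q' * V) * V' = (V * V')ᵀ * Q' * (V * V') := by
      simp only [Matrix.transpose_mul, Matrix.mul_assoc]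
    rw [this]
    exact conj_mem _ (SO3.mul hV hV')
  -- conclude
  constructor
  · by_contra h
    push_neg at h
    have hall : ∀ Q2 ∈ W Q20, 0 ≤ F Q1 Q2 := h
    have ht' : 0 < F Q1 Q' := lt_of_le_of_ne (hall _ m1) (Ne.symm ht)
    have v1 := hall _ (mT T1 T1mem T1T 1 SO3.one)
    have v2 := hall _ (mT T2 T2mem T2T 1 SO3.one)
    have v3 := hall _ (mT T3 T3mem T3T 1 SO3.one)
    have v4 := hall _ (conj_mem Cc Ccmem)
    have v5 := hall _ (mT T1 T1mem T1T Cc Ccmem)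
    have v6 := hall _ (mT T2 T2mem T2T Cc Ccmem)
    have v7 := hall _ (mT T3 T3mem T3T Cc Ccmem)
    have v8 := hall _ (conj_mem (Cc*Cc) (SO3.mul Ccmem Ccmem))
    have v9 := hall _ (mT T1 T1mem T1T (Cc*Cc) (SO3.mul Ccmem Ccmem))
    have v10 := hall _ (mT T2 T2mem T2T (Cc*Cc) (SO3.mul Ccmem Ccmem))
    have v11 := hall _ (mT T3 T3mem T3T (Cc*Cc) (SO3.mul Ccmem Ccmem))
    have e1 : (1:M3)ᵀ * (T1 * Q' * T1) * 1 = T1 * Q' * T1 := by simp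
    have e2 : (1:M3)ᵀ * (T2 * Q' * T2) * 1 = T2 * Q' * T2 := by simp
    have e3 : (1:M3)ᵀ * (T3 * Q' * T3) * 1 = T3 * Q' * T3 := by simp
    rw [e1] at v1; rw [e2] at v2; rw [e3] at v3
    linarith [key]
  · by_contra h
    push_neg at h
    have hall : ∀ Q2 ∈ W Q20, F Q1 Q2 ≤ 0 := h
    have ht' : F Q1 Q' < 0 := lt_of_le_of_ne (hall _ m1) ht
    have v1 := hall _ (mT T1 T1mem T1T 1 SO3.one)
    have v2 := hall _ (mT T2 T2mem T2T 1 SO3.one)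
    have v3 := hall _ (mT T3 T3mem T3T 1 SO3.one)
    have v4 := hall _ (conj_mem Cc Ccmem)
    have v5 := hall _ (mT T1 T1mem T1T Cc Ccmem)
    have v6 := hall _ (mT T2 T2mem T2T Cc Ccmem)
    have v7 := hall _ (mT T3 T3mem T3T Cc Ccmem)
    have v8 := hall _ (conj_mem (Cc*Cc) (SO3.mul Ccmem Ccmem))
    have v9 := hall _ (mT T1 T1mem T1T (Cc*Cc) (SO3.mul Ccmem Ccmem))
    have v10 := hall _ (mT T2 T2mem T2T (Cc*Cc) (SO3.mul Ccmem Ccmem))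
    have v11 := hall _ (mT T3 T3mem T3T (Cc*Cc) (SO3.mul Ccmem Ccmem))
    have e1 : (1:M3)ᵀ * (T1 * Q' * T1) * 1 = T1 * Q' * T1 := by simp
    have e2 : (1:M3)ᵀ * (T2 * Q' * T2) * 1 = T2 * Q' * T2 := by simp
    have e3 : (1:M3)ᵀ * (T3 * Q' * T3) * 1 = T3 * Q' * T3 := by simp
    rw [e1] at v1; rw [e2] at v2; rw [e3] at v3
    linarith [key]

/-! ### Compactness and continuity -/

lemma SO3_closed : IsClosed SO3 := by
  have hc1 : Continuous fun U : M3 => Uᵀ * U :=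
    (Continuous.matrix_transpose continuous_id).matrix_mul continuous_id
  have hc2 : Continuous fun U : M3 => U.det := continuous_id.matrix_det
  have : SO3 = {U : M3 | Uᵀ * U = 1} ∩ {U : M3 | U.det = 1} := rfl
  rw [this]
  exact (isClosed_eq hc1 continuous_const).inter (isClosed_eq hc2 continuous_const)

lemma SO3_compact : IsCompact SO3 := by
  have hKc : IsCompact (Set.univ.pi fun _ : Fin 3 => Set.univ.pi fun _ : Fin 3 =>
      Set.Icc (-1:ℝ) 1) :=
    isCompact_univ_pi fun _ => isCompact_univ_pi fun _ => isCompact_Icc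
  apply IsCompact.of_isClosed_subset hKc SO3_closed
  intro U hU
  rw [Set.mem_univ_pi]
  intro j
  rw [Set.mem_univ_pi]
  intro i
  have hdiag : ∑ k, U k i * U k i = 1 := by
    have := congrFun (congrFun (show (@id M3 U)ᵀ * (@id M3 U) = 1 from hU.1) i) i
    simp [Matrix.mul_apply, Matrix.transpose_apply, Matrix.one_apply] at this; exact this
  have h1 : U j i * U j i ≤ 1 := by
    calc U j i * U j i ≤ ∑ k, U k i * U k i :=
          Finset.single_le_sum (fun k _ => mul_self_nonneg (U k i)) (Finset.mem_univ j)
    _ = 1 := hdiag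
  constructor <;> nlinarith

lemma W_compact (Q0 : M3) : IsCompact (W Q0) := by
  have himg : W Q0 = (fun U : M3 => Uᵀ * Q0 * U) '' SO3 := by
    ext Q
    constructor
    · rintro ⟨U, hU, rfl⟩; exact ⟨U, hU, rfl⟩
    · rintro ⟨U, hU, rfl⟩; exact ⟨U, hU, rfl⟩
  rw [himg]
  exact SO3_compact.image
    (((Continuous.matrix_transpose continuous_id).matrix_mul continuous_const).matrix_mul
      continuous_id)

lemma F_cont (Q2 : M3) : Continuous fun Q1 => F Q1 Q2 := by
  have hL : Continuous L := by
    unfold L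
    exact (((((continuous_const.matrix_mul continuous_id).matrix_mul
      continuous_const).const_smul (35:ℝ)).sub
      ((continuous_const.matrix_mul continuous_id).const_smul (10:ℝ))).sub
      ((continuous_id.matrix_mul continuous_const).const_smul (10:ℝ))).add
      (continuous_id.const_smul (2:ℝ))
  exact (hL.matrix_mul continuous_const).matrix_trace

/-! ### The main theorem -/

/-- There is `c₀ > 0` such that for every `Q₁` in the rotation orbit `W₁` of `Q10`, the
quadrupole-quadrupole interaction `F(Q₁, ·)` takes values `< −c₀` and values `> c₀` on the
rotation orbit `W₂` of `Q20`. -/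
theorem stmt13 (Q10 Q20 : M3) (h1s : Q10ᵀ = Q10) (h2s : Q20ᵀ = Q20)
    (h1t : Q10.trace = 0) (h2t : Q20.trace = 0) (h1n : Q10 ≠ 0) (h2n : Q20 ≠ 0) :
    ∃ c₀ > (0 : ℝ), ∀ Q₁ ∈ W Q10,
      (∃ Q₂ ∈ W Q20, F Q₁ Q₂ < -c₀) ∧ (∃ Q₂' ∈ W Q20, c₀ < F Q₁ Q₂') := by
  have hpt : ∀ Q₁ ∈ W Q10, (∃ Q₂ ∈ W Q20, F Q₁ Q₂ < 0) ∧ (∃ Q₂ ∈ W Q20, 0 < F Q₁ Q₂) := by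
    rintro Q₁ ⟨U, hU, rfl⟩
    have hQs : (Uᵀ * Q10 * U)ᵀ = Uᵀ * Q10 * U := by
      calc (Uᵀ * Q10 * U)ᵀ = Uᵀ * (Q10ᵀ * Uᵀᵀ) := by
            simp only [Matrix.transpose_mul, Matrix.transpose_transpose, Matrix.mul_assoc]
      _ = Uᵀ * Q10 * U := by rw [h1s, Matrix.transpose_transpose, Matrix.mul_assoc]
    have hQt : (Uᵀ * Q10 * U).trace = 0 := by rw [trace_conj' hU.1, h1t]
    have hQn : Uᵀ * Q10 * U ≠ 0 := by
      intro h0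
      apply h1n
      have e : U * (Uᵀ * Q10 * U) * Uᵀ = Q10 := by
        simp only [Matrix.mul_assoc]
        rw [cancel_left' (SO3.mulT hU), SO3.mulT hU, Matrix.mul_one]
      rw [h0, Matrix.mul_zero, Matrix.zero_mul] at e
      exact e.symm
    exact both_signs _ _ h2t (exists_F_ne _ _ hQs hQt hQn h2s h2t h2n)
  set G : ℕ → Set M3 := fun n =>
    {Q₁ | (∃ Q₂ ∈ W Q20, F Q₁ Q₂ < -(1/((n:ℝ)+1))) ∧ (∃ Q₂ ∈ W Q20, 1/((n:ℝ)+1) < F Q₁ Q₂)}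
    with hGdef
  have hGopen : ∀ n, IsOpen (G n) := by
    intro n
    have h1 : {Q₁ : M3 | ∃ Q₂ ∈ W Q20, F Q₁ Q₂ < -(1/((n:ℝ)+1))}
        = ⋃ Q₂ ∈ W Q20, {Q₁ : M3 | F Q₁ Q₂ < -(1/((n:ℝ)+1))} := by ext; simp
    have h2 : {Q₁ : M3 | ∃ Q₂ ∈ W Q20, 1/((n:ℝ)+1) < F Q₁ Q₂}
        = ⋃ Q₂ ∈ W Q20, {Q₁ : M3 | 1/((n:ℝ)+1) < F Q₁ Q₂} := by ext; simp
    have hGn : G n = {Q₁ : M3 | ∃ Q₂ ∈ W Q20, F Q₁ Q₂ < -(1/((n:ℝ)+1))}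
        ∩ {Q₁ : M3 | ∃ Q₂ ∈ W Q20, 1/((n:ℝ)+1) < F Q₁ Q₂} := rfl
    rw [hGn, h1, h2]
    exact (isOpen_biUnion fun Q₂ _ => isOpen_lt (F_cont Q₂) continuous_const).inter
      (isOpen_biUnion fun Q₂ _ => isOpen_lt continuous_const (F_cont Q₂))
  have hcover : W Q10 ⊆ ⋃ n, G n := by
    intro Q₁ hQ₁
    obtain ⟨⟨Q₂, hm2, hlt⟩, ⟨Q₂', hm2', hgt⟩⟩ := hpt Q₁ hQ₁
    obtain ⟨n, hn⟩ := exists_nat_one_div_lt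
      (show (0:ℝ) < min (-F Q₁ Q₂) (F Q₁ Q₂') from lt_min (by linarith) hgt)
    refine Set.mem_iUnion.mpr ⟨n, ⟨Q₂, hm2, ?_⟩, ⟨Q₂', hm2', ?_⟩⟩
    · have := lt_of_lt_of_le hn (min_le_left _ _); linarith
    · have := lt_of_lt_of_le hn (min_le_right _ _); linarith
  obtain ⟨t, hft⟩ := (W_compact Q10).elim_finite_subcover G hGopen hcover
  set N := t.sup id with hN
  have hmono : ∀ n ∈ t, G n ⊆ G N := by
    intro n hn Q₁ hQ
    have hle : (n:ℝ) ≤ (N:ℝ) := Nat.cast_le.mpr (Finset.le_sup (f := id) hn)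
    have hfrac : (1:ℝ)/((N:ℝ)+1) ≤ 1/((n:ℝ)+1) := by
      apply one_div_le_one_div_of_le
      · positivity
      · linarith
    obtain ⟨⟨Q₂, h2m, h2v⟩, ⟨Q₂', h2m', h2v'⟩⟩ := hQ
    exact ⟨⟨Q₂, h2m, by linarith⟩, ⟨Q₂', h2m', by linarith⟩⟩
  refine ⟨1/((N:ℝ)+1), by positivity, ?_⟩
  intro Q₁ hQ₁
  obtain ⟨n, hn, hQ⟩ := Set.mem_iUnion₂.mp (hft hQ₁)
  exact hmono n hn hQ
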